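/- Let S be a monoid, λ a nonzero cardinal, n ≤ λ a positive integer, and i ≤ n. Let x be the element of 𝓘_λ^n(S) with rows (a₁,…,a_i), (s₁,…,s_i), (b₁,…,b_i) and y the element with rows (c₁,…,c_i), (t₁,…,t_i), (d₁,…,d_i), both nonzero. Then x 𝓓 y in 𝓘_λ^n(S) if and only if there exists a permutation σ of {1,…,i} such that s_j 𝓓 t_{σ(j)} in S for all j = 1,…,i. -/

import Mathlib

open Classical

namespace ISemExt

/-- Carrier for the extension `𝓘_λ^n(S)`: an element is a function assigning to each
pair `(x,y)` of points of `lam` an optional value in `S` (its labelled graph). -/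
def Elem (lam S : Type) : Type := lam → lam → Option S

/-- The zero element (the empty map). -/
def zeroE (lam S : Type) : Elem lam S := fun _ _ => none

/-- Multiplication in `𝓘_λ^n(S)`: composition of labelled partial maps,
multiplying the labels along composable pairs. -/
noncomputable def mulE {lam S : Type} [Mul S] (f g : Elem lam S) : Elem lam S :=
  fun x z =>
    if h : ∃ y s t, f x y = some s ∧ g y z = some t then
      some (h.choose_spec.choose * h.choose_spec.choose_spec.choose)
    else none

/-- The graph of an element. -/
def graphOf {lam S : Type} (f : Elem lam S) : Set (lam × lam) :=
  {p | (f p.1 p.2).isSome}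

/-- `Valid n f` says that `f` is an element of `𝓘_λ^n(S)`: it is a partial
injective labelled map (in both directions) of rank at most `n`. -/
def Valid {lam S : Type} (n : ℕ) (f : Elem lam S) : Prop :=
  (∀ ⦃x y₁ y₂⦄, (f x y₁).isSome → (f x y₂).isSome → y₁ = y₂) ∧
  (∀ ⦃x₁ x₂ y⦄, (f x₁ y).isSome → (f x₂ y).isSome → x₁ = x₂) ∧
  (graphOf f).Finite ∧ (graphOf f).ncard ≤ n

/-- The element with rows `(a₁,…,a_i)`, `(s₁,…,s_i)`, `(b₁,…,b_i)`. -/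
noncomputable def mk3 {lam S : Type} {i : ℕ} (a : Fin i → lam) (s : Fin i → S)
    (b : Fin i → lam) : Elem lam S :=
  fun x y => if h : ∃ j, a j = x ∧ b j = y then some (s h.choose) else none

/-- Green's relation `𝓡` in the monoid `S`. -/
def GreenRS {S : Type} [Monoid S] (x y : S) : Prop :=
  (∃ u, x = y * u) ∧ (∃ v, y = x * v)

/-- Green's relation `𝓛` in the monoid `S`. -/
def GreenLS {S : Type} [Monoid S] (x y : S) : Prop :=
  (∃ u, x = u * y) ∧ (∃ v, y = v * x)

/-- Green's relation `𝓓 = 𝓡 ∘ 𝓛` in the monoid `S`. -/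
def GreenDS {S : Type} [Monoid S] (x y : S) : Prop :=
  ∃ z : S, GreenRS x z ∧ GreenLS z y

/-- Green's relation `𝓡` in the semigroup `𝓘_λ^n(S)` (with identity adjoined). -/
def GreenRI {lam S : Type} [Mul S] (n : ℕ) (f g : Elem lam S) : Prop :=
  (f = g ∨ ∃ u : Elem lam S, Valid n u ∧ f = mulE g u) ∧
  (g = f ∨ ∃ v : Elem lam S, Valid n v ∧ g = mulE f v)

/-- Green's relation `𝓛` in the semigroup `𝓘_λ^n(S)` (with identity adjoined). -/
def GreenLI {lam S : Type} [Mul S] (n : ℕ) (f g : Elem lam S) : Prop :=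
  (f = g ∨ ∃ u : Elem lam S, Valid n u ∧ f = mulE u g) ∧
  (g = f ∨ ∃ v : Elem lam S, Valid n v ∧ g = mulE v f)

/-- Green's relation `𝓓 = 𝓡 ∘ 𝓛` in the semigroup `𝓘_λ^n(S)`. -/
def GreenDI {lam S : Type} [Mul S] (n : ℕ) (f g : Elem lam S) : Prop :=
  ∃ h : Elem lam S, Valid n h ∧ GreenRI n f h ∧ GreenLI n h g


/-!
Inside a 𝓡-class of `𝓘_λ^n(S)` the domain of an element is fixed and the labels at each point
of the domain move within an 𝓡-class of `S`; dually an 𝓛-class fixes the image and moves the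
labels within 𝓛-classes. Following a point of the domain of `x` through the 𝓡-step and then the
𝓛-step to `y` therefore matches each label `s_j` injectively with a label `t_{σ j}` that is
𝓓-related to it. Conversely, given `σ` and witnesses `s_j 𝓡 z_j 𝓛 t_{σ j}`, the element with rows
`a`, `z`, `d ∘ σ` is 𝓡-related to `x` and 𝓛-related to `y`, all multipliers being again elements
of the same shape.
-/

variable {lam S : Type}

def support (f : Elem lam S) (x y : lam) : Prop := (f x y).isSome

lemma support_of_apply_eq_some {f : Elem lam S} {x y : lam} {s : S} (h : f x y = some s) :
    support f x y := by
  simp [support, h]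

section Mul

variable [Mul S] {f g : Elem lam S} {x y z : lam}

lemma mulE_eq_some (hf : Relator.RightUnique (support f)) {u v : S}
    (hfu : f x y = some u) (hgv : g y z = some v) :
    mulE f g x z = some (u * v) := by
  have hex : ∃ y' s t, f x y' = some s ∧ g y' z = some t := ⟨y, u, v, hfu, hgv⟩
  obtain ⟨hfs, hgt⟩ := hex.choose_spec.choose_spec.choose_spec
  have hy : hex.choose = y := hf (support_of_apply_eq_some hfs) (support_of_apply_eq_some hfu)
  have hu : hex.choose_spec.choose = u := Option.some_inj.mp (hfs.symm.trans (hy ▸ hfu))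
  have hv : hex.choose_spec.choose_spec.choose = v := Option.some_inj.mp (hgt.symm.trans (hy ▸ hgv))
  simp only [mulE, dif_pos hex]
  rw [hv, hu]

lemma exists_of_mulE_eq_some {w : S} (h : mulE f g x z = some w) :
    ∃ y u v, f x y = some u ∧ g y z = some v ∧ w = u * v := by
  by_cases hex : ∃ y s t, f x y = some s ∧ g y z = some t
  · obtain ⟨hfs, hgt⟩ := hex.choose_spec.choose_spec.choose_spec
    simp only [mulE, dif_pos hex, Option.some_inj] at h
    exact ⟨_, _, _, hfs, hgt, h.symm⟩
  · simp only [mulE, dif_neg hex, reduceCtorEq] at h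

lemma mulE_eq_none (hex : ¬ ∃ y s t, f x y = some s ∧ g y z = some t) :
    mulE f g x z = none := by
  simp only [mulE, dif_neg hex]

end Mul

section Mk3

variable {i : ℕ} {a b : Fin i → lam} {s : Fin i → S}

lemma mk3_apply (ha : Function.Injective a) (j : Fin i) :
    mk3 a s b (a j) (b j) = some (s j) := by
  have hex : ∃ k, a k = a j ∧ b k = b j := ⟨j, rfl, rfl⟩
  simp only [mk3, dif_pos hex, ha hex.choose_spec.1]

lemma exists_of_mk3_eq_some {x y : lam} {v : S} (h : mk3 a s b x y = some v) :
    ∃ j, a j = x ∧ b j = y ∧ s j = v := by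
  by_cases hex : ∃ k, a k = x ∧ b k = y
  · simp only [mk3, dif_pos hex, Option.some_inj] at h
    exact ⟨_, hex.choose_spec.1, hex.choose_spec.2, h⟩
  · simp only [mk3, dif_neg hex, reduceCtorEq] at h

lemma mk3_eq_none {x y : lam} (hex : ¬ ∃ k, a k = x ∧ b k = y) :
    mk3 a s b x y = none := by
  simp only [mk3, dif_neg hex]

lemma support_mk3 {x y : lam} : support (mk3 a s b) x y ↔ ∃ k, a k = x ∧ b k = y := by
  by_cases hex : ∃ k, a k = x ∧ b k = y <;> simp [support, mk3, hex]

lemma rightUnique_support_mk3 (ha : Function.Injective a) :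
    Relator.RightUnique (support (mk3 a s b)) := by
  rintro x y₁ y₂ h₁ h₂
  obtain ⟨j₁, rfl, rfl⟩ := support_mk3.mp h₁
  obtain ⟨j₂, hj, rfl⟩ := support_mk3.mp h₂
  rw [ha hj]

lemma leftUnique_support_mk3 (hb : Function.Injective b) :
    Relator.LeftUnique (support (mk3 a s b)) := by
  rintro x₁ x₂ y h₁ h₂
  obtain ⟨j₁, rfl, rfl⟩ := support_mk3.mp h₁
  obtain ⟨j₂, rfl, hj⟩ := support_mk3.mp h₂
  rw [hb hj]

lemma graphOf_mk3 : graphOf (mk3 a s b) = Set.range (fun j => (a j, b j)) := by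
  ext ⟨x, y⟩
  exact support_mk3.trans (by simp)

lemma valid_mk3 {n : ℕ} (ha : Function.Injective a) (hb : Function.Injective b)
    (hin : i ≤ n) : Valid n (mk3 a s b) := by
  refine ⟨rightUnique_support_mk3 ha, leftUnique_support_mk3 hb, ?_, ?_⟩
  · rw [graphOf_mk3]
    exact Set.finite_range _
  · rw [graphOf_mk3, ← Set.image_univ]
    calc ((fun j => (a j, b j)) '' Set.univ).ncard
        ≤ (Set.univ : Set (Fin i)).ncard := Set.ncard_image_le Set.finite_univ
      _ = i := by simp
      _ ≤ n := hin

lemma mulE_mk3_mk3 [Mul S] {e : Fin i → lam} {u : Fin i → S}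
    (ha : Function.Injective a) (he : Function.Injective e) :
    mulE (mk3 a s e) (mk3 e u b) = mk3 a (s * u) b := by
  funext x y
  by_cases hex : ∃ j, a j = x ∧ b j = y
  · obtain ⟨j, rfl, rfl⟩ := hex
    rw [mulE_eq_some (rightUnique_support_mk3 ha) (mk3_apply ha j) (mk3_apply he j),
      mk3_apply ha j, Pi.mul_apply]
  · rw [mk3_eq_none hex]
    apply mulE_eq_none
    rintro ⟨m, s', u', hs, hu⟩
    obtain ⟨j₁, hj₁, hm, -⟩ := exists_of_mk3_eq_some hs
    obtain ⟨j₂, rfl, hj₂, -⟩ := exists_of_mk3_eq_some hu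
    exact hex ⟨j₁, hj₁, he hm ▸ hj₂⟩

lemma mk3_comp_perm (ha : Function.Injective a) (σ : Equiv.Perm (Fin i)) :
    mk3 (a ∘ σ) (s ∘ σ) (b ∘ σ) = mk3 a s b := by
  funext x y
  by_cases hex : ∃ j, a j = x ∧ b j = y
  · obtain ⟨j, rfl, rfl⟩ := hex
    rw [mk3_apply ha j]
    simpa using mk3_apply (s := s ∘ σ) (b := b ∘ σ) (ha.comp σ.injective) (σ.symm j)
  · rw [mk3_eq_none hex]
    exact mk3_eq_none fun ⟨j, h₁, h₂⟩ => hex ⟨σ j, h₁, h₂⟩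

end Mk3

section Green

variable [Monoid S] {n : ℕ}

lemma exists_apply_of_eq_mulE_right {f h : Elem lam S} {x y : lam} {s : S}
    (hfh : f = h ∨ ∃ u, f = mulE h u) (hfx : f x y = some s) :
    ∃ y' z, h x y' = some z ∧ ∃ u, s = z * u := by
  rcases hfh with rfl | ⟨u, rfl⟩
  · exact ⟨y, s, hfx, 1, (mul_one s).symm⟩
  · obtain ⟨y', z, u', hhz, -, hs⟩ := exists_of_mulE_eq_some hfx
    exact ⟨y', z, hhz, u', hs⟩

lemma exists_apply_of_eq_mulE_left {h g : Elem lam S} {x y : lam} {z : S}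
    (hhg : h = g ∨ ∃ u, h = mulE u g) (hhx : h x y = some z) :
    ∃ x' w, g x' y = some w ∧ ∃ u, z = u * w := by
  rcases hhg with rfl | ⟨u, rfl⟩
  · exact ⟨x, z, hhx, 1, (one_mul z).symm⟩
  · obtain ⟨x', u', w, -, hgw, hz⟩ := exists_of_mulE_eq_some hhx
    exact ⟨x', w, hgw, u', hz⟩

lemma exists_greenRS_of_greenRI {f h : Elem lam S} (hf : Relator.RightUnique (support f))
    (hR : GreenRI n f h) {x y : lam} {s : S} (hfx : f x y = some s) :
    ∃ y' z, h x y' = some z ∧ GreenRS s z := by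
  obtain ⟨y', z, hhz, hsz⟩ :=
    exists_apply_of_eq_mulE_right (hR.1.imp_right fun ⟨u, _, hu⟩ => ⟨u, hu⟩) hfx
  obtain ⟨y₁, s₁, hfs₁, hzs₁⟩ :=
    exists_apply_of_eq_mulE_right (hR.2.imp_right fun ⟨v, _, hv⟩ => ⟨v, hv⟩) hhz
  obtain rfl : y₁ = y := hf (support_of_apply_eq_some hfs₁) (support_of_apply_eq_some hfx)
  obtain rfl : s₁ = s := Option.some_inj.mp (hfs₁.symm.trans hfx)
  exact ⟨y', z, hhz, hsz, hzs₁⟩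

lemma exists_greenLS_of_greenLI {h g : Elem lam S} (hh : Relator.LeftUnique (support h))
    (hL : GreenLI n h g) {x y : lam} {z : S} (hhx : h x y = some z) :
    ∃ x' w, g x' y = some w ∧ GreenLS z w := by
  obtain ⟨x', w, hgw, hzw⟩ :=
    exists_apply_of_eq_mulE_left (hL.1.imp_right fun ⟨u, _, hu⟩ => ⟨u, hu⟩) hhx
  obtain ⟨x₁, z₁, hhz₁, hwz₁⟩ :=
    exists_apply_of_eq_mulE_left (hL.2.imp_right fun ⟨v, _, hv⟩ => ⟨v, hv⟩) hgw
  obtain rfl : x₁ = x := hh (support_of_apply_eq_some hhz₁) (support_of_apply_eq_some hhx)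
  obtain rfl : z₁ = z := Option.some_inj.mp (hhz₁.symm.trans hhx)
  exact ⟨x', w, hgw, hzw, hwz₁⟩

variable {i : ℕ} {a b c d e : Fin i → lam} {s t z : Fin i → S}

lemma exists_perm_of_greenDI_mk3 (ha : Function.Injective a)
    (hD : GreenDI n (mk3 a s b) (mk3 c t d)) :
    ∃ σ : Equiv.Perm (Fin i), ∀ j, GreenDS (s j) (t (σ j)) := by
  obtain ⟨h, hh, hR, hL⟩ := hD
  choose e z he hsz using fun j =>
    exists_greenRS_of_greenRI (rightUnique_support_mk3 ha) hR (mk3_apply (s := s) (b := b) ha j)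
  choose x' w hw hzw using fun j => exists_greenLS_of_greenLI hh.2.1 hL (he j)
  choose σ _ hσd hσt using fun j => exists_of_mk3_eq_some (hw j)
  -- `σ j` is read off the image point `e j` of `a j` under the injective map `h`.
  have hσ : Function.Injective σ := fun j j' hjj' => by
    have hej : e j = e j' := by rw [← hσd j, ← hσd j', hjj']
    exact ha (hh.2.1 (support_of_apply_eq_some (he j)) (hej ▸ support_of_apply_eq_some (he j')))
  refine ⟨Equiv.ofBijective σ (Finite.injective_iff_bijective.mp hσ), fun j => ⟨z j, hsz j, ?_⟩⟩
  simpa [hσt j] using hzw j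

lemma greenRI_mk3 (ha : Function.Injective a) (hb : Function.Injective b)
    (he : Function.Injective e) (hin : i ≤ n) (hsz : ∀ j, GreenRS (s j) (z j)) :
    GreenRI n (mk3 a s b) (mk3 a z e) := by
  choose u hu using fun j => (hsz j).1
  choose v hv using fun j => (hsz j).2
  refine ⟨.inr ⟨mk3 e u b, valid_mk3 he hb hin, ?_⟩, .inr ⟨mk3 b v e, valid_mk3 hb he hin, ?_⟩⟩
  · rw [mulE_mk3_mk3 ha he, show z * u = s from funext fun j => (hu j).symm]
  · rw [mulE_mk3_mk3 ha hb, show s * v = z from funext fun j => (hv j).symm]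

lemma greenLI_mk3 (ha : Function.Injective a) (hc : Function.Injective c) (hin : i ≤ n)
    (hzt : ∀ j, GreenLS (z j) (t j)) :
    GreenLI n (mk3 a z e) (mk3 c t e) := by
  choose u hu using fun j => (hzt j).1
  choose v hv using fun j => (hzt j).2
  refine ⟨.inr ⟨mk3 a u c, valid_mk3 ha hc hin, ?_⟩, .inr ⟨mk3 c v a, valid_mk3 hc ha hin, ?_⟩⟩
  · rw [mulE_mk3_mk3 ha hc, show u * t = z from funext fun j => (hu j).symm]
  · rw [mulE_mk3_mk3 hc ha, show v * z = t from funext fun j => (hv j).symm]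

end Green

theorem greenD_iff_general (lam S : Type) [Monoid S]
    (n i : ℕ) (hin : i ≤ n)
    (a b c d : Fin i → lam) (s t : Fin i → S)
    (ha : Function.Injective a) (hb : Function.Injective b)
    (hc : Function.Injective c) (hd : Function.Injective d) :
    GreenDI n (mk3 a s b) (mk3 c t d) ↔
      ∃ σ : Equiv.Perm (Fin i), ∀ j, GreenDS (s j) (t (σ j)) := by
  refine ⟨exists_perm_of_greenDI_mk3 ha, fun ⟨σ, hσ⟩ => ?_⟩
  choose z hsz hzt using hσ
  have hdσ : Function.Injective (d ∘ σ) := hd.comp σ.injective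
  refine ⟨mk3 a z (d ∘ σ), valid_mk3 ha hdσ hin, greenRI_mk3 ha hb hdσ hin hsz, ?_⟩
  rw [← mk3_comp_perm (s := t) hc σ]
  exact greenLI_mk3 ha (hc.comp σ.injective) hin hzt

/-- Characterization of Green's relation `𝓓` on `𝓘_λ^n(S)` for a monoid `S`. -/
theorem greenD_iff (lam S : Type) [Nonempty lam] [Monoid S]
    (n i : ℕ) (hn : 0 < n) (hcard : (n : Cardinal) ≤ Cardinal.mk lam)
    (hi : 0 < i) (hin : i ≤ n)
    (a b c d : Fin i → lam) (s t : Fin i → S)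
    (ha : Function.Injective a) (hb : Function.Injective b)
    (hc : Function.Injective c) (hd : Function.Injective d) :
    GreenDI n (mk3 a s b) (mk3 c t d) ↔
      ∃ σ : Equiv.Perm (Fin i), ∀ j, GreenDS (s j) (t (σ j)) :=
  greenD_iff_general lam S n i hin a b c d s t ha hb hc hd

end ISemExt
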